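/- arXiv:0805.4721 — 6 statements merged into one kernel-verified Lean document; each statement's English description precedes it below -/
import Mathlib

section
/- Let X be a reflexive real Banach space and T : X → X* a bounded linear operator that is strictly positive, i.e., ⟨Tx, x⟩ ≥ 0 for all x ∈ X and ⟨Tx, x⟩ ≠ 0 whenever x ≠ 0. Then the range T(X) is dense in X* (in the norm topology of X*). -/
/-! If T(X) were not dense, Hahn–Banach would give a nonzero functional on X* vanishing on T(X).
By reflexivity it is evaluation at some x ≠ 0, and then ⟨Tx, x⟩ = 0 contradicts strict
positivity. -/

open NormedSpace

theorem LinearMap.apply_eq_zero_of_lt_on_submodule {M : Type*} [AddCommGroup M] [Module ℝ M]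
    (f : M →ₗ[ℝ] ℝ) (S : Submodule ℝ M) {u : ℝ} (hf : ∀ a ∈ S, f a < u) :
    ∀ a ∈ S, f a = 0 := by
  intro a ha
  by_contra hfa
  have hscaled := hf (((u + 1) / f a) • a) (S.smul_mem _ ha)
  rw [map_smul, smul_eq_mul, div_mul_cancel₀ _ hfa] at hscaled
  linarith

theorem Submodule.dense_of_forall_dual_eq_zero {E : Type*} [AddCommGroup E] [Module ℝ E]
    [TopologicalSpace E] [IsTopologicalAddGroup E] [ContinuousSMul ℝ E] [LocallyConvexSpace ℝ E]
    (S : Submodule ℝ E) (hS : ∀ φ : StrongDual ℝ E, (∀ a ∈ S, φ a = 0) → φ = 0) :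
    Dense (S : Set E) := by
  rw [dense_iff_closure_eq, Set.eq_univ_iff_forall]
  by_contra! ⟨x, hx⟩
  rw [← S.topologicalClosure_coe] at hx
  obtain ⟨φ, u, hφS, hφx⟩ := geometric_hahn_banach_closed_point
    S.topologicalClosure.convex S.isClosed_topologicalClosure hx
  have hφ : φ = 0 := hS φ fun a ha ↦
    φ.toLinearMap.apply_eq_zero_of_lt_on_submodule _ hφS a (S.le_topologicalClosure ha)
  have hu : 0 < u := by simpa using hφS 0 (zero_mem _)
  simp only [hφ, zero_apply] at hφx
  linarith

theorem stmt_3_general (X : Type*) [NormedAddCommGroup X] [NormedSpace ℝ X]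
    (hrefl : Function.Surjective (inclusionInDoubleDual ℝ X))
    (T : X →L[ℝ] StrongDual ℝ X)
    (hstrict : ∀ x : X, x ≠ 0 → T x x ≠ 0) :
    DenseRange (T : X → StrongDual ℝ X) := by
  refine (LinearMap.range (T : X →ₗ[ℝ] StrongDual ℝ X)).dense_of_forall_dual_eq_zero
    fun φ hφ ↦ ?_
  obtain ⟨x, rfl⟩ := hrefl φ
  have hx : x = 0 := not_imp_not.mp (hstrict x) (hφ (T x) ⟨x, rfl⟩)
  rw [hx, map_zero]

theorem stmt_3 (X : Type*) [NormedAddCommGroup X] [NormedSpace ℝ X] [CompleteSpace X]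
    (hrefl : Function.Surjective (inclusionInDoubleDual ℝ X))
    (T : X →L[ℝ] StrongDual ℝ X)
    (hpos : ∀ x : X, 0 ≤ T x x)
    (hstrict : ∀ x : X, x ≠ 0 → T x x ≠ 0) :
    DenseRange (T : X → StrongDual ℝ X) :=
  stmt_3_general X hrefl T hstrict
end

section
/- Every positive linear operator T : X → X* from a real Banach space X into its continuous dual (i.e., a linear map, not assumed continuous, with ⟨Tx, x⟩ ≥ 0 for all x ∈ X) is bounded. -/
/-!
A positive operator is monotone, `0 ≤ (T u - T y) (u - y)`, and Minty's trick shows that the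
graph of a monotone linear operator is closed: if `u n → x` and `T (u n) → f`, then
`0 ≤ (f - T y) (x - y)` for every `y`, and testing with `y = x - t • z`, `t → 0⁺`, gives
`f = T x`. The closed graph theorem finishes the proof.
-/

open Filter Topology

lemma nonneg_of_forall_pos_nonneg_add_mul {a c : ℝ} (h : ∀ t : ℝ, 0 < t → 0 ≤ a + t * c) :
    0 ≤ a := by
  have hcont : Continuous fun t : ℝ => a + t * c := by fun_prop
  have hlim : Tendsto (fun t : ℝ => a + t * c) (𝓝[>] 0) (𝓝 a) :=
    (hcont.tendsto' 0 a (by simp)).mono_left nhdsWithin_le_nhds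
  exact ge_of_tendsto hlim (eventually_nhdsWithin_of_forall fun t ht => h t ht)

lemma LinearMap.eq_apply_of_forall_nonneg_sub_apply_sub {E : Type*} [AddCommGroup E] [Module ℝ E]
    [TopologicalSpace E] (T : E →ₗ[ℝ] StrongDual ℝ E)
    {f : StrongDual ℝ E} {x : E} (h : ∀ y : E, 0 ≤ (f - T y) (x - y)) : f = T x := by
  have hle : ∀ z : E, 0 ≤ f z - T x z := fun z =>
    nonneg_of_forall_pos_nonneg_add_mul (c := T z z) fun t ht => by
      have key := h (x - t • z)
      have expand : (f - T (x - t • z)) (x - (x - t • z)) =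
          t * (f z - T x z + t * T z z) := by
        simp only [sub_sub_cancel, map_sub, map_smul, _root_.sub_apply,
          _root_.smul_apply, smul_eq_mul]
        ring
      rw [expand] at key
      exact nonneg_of_mul_nonneg_right (by linarith) ht
  ext z
  have := hle (-z)
  simp only [map_neg] at this
  linarith [hle z]

lemma LinearMap.continuous_of_forall_nonneg_apply_self {E : Type*} [NormedAddCommGroup E]
    [NormedSpace ℝ E] [CompleteSpace E] (T : E →ₗ[ℝ] StrongDual ℝ E)
    (hpos : ∀ x : E, 0 ≤ T x x) : Continuous T := by
  refine T.continuous_of_seq_closed_graph fun u x f hu hTu =>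
    T.eq_apply_of_forall_nonneg_sub_apply_sub fun y => ?_
  have hlim : Tendsto (fun n => (T (u n) - T y) (u n - y)) atTop (𝓝 ((f - T y) (x - y))) :=
    (isBoundedBilinearMap_apply.continuous.tendsto _).comp
      ((hTu.sub tendsto_const_nhds).prodMk_nhds (hu.sub tendsto_const_nhds))
  refine ge_of_tendsto' hlim fun n => ?_
  simpa only [map_sub, _root_.sub_apply] using hpos (u n - y)

theorem stmt_8 (X : Type*) [NormedAddCommGroup X] [NormedSpace ℝ X] [CompleteSpace X]
    (T : X →ₗ[ℝ] StrongDual ℝ X)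
    (hpos : ∀ x : X, 0 ≤ T x x) :
    ∃ C : ℝ, ∀ x : X, ‖T x‖ ≤ C * ‖x‖ := by
  let S : X →L[ℝ] StrongDual ℝ X := ⟨T, T.continuous_of_forall_nonneg_apply_self hpos⟩
  exact ⟨‖S‖, S.le_opNorm⟩
end

section
/- Let X be a real Banach space and T : X → X* a bounded linear operator that is positive (⟨Tx, x⟩ ≥ 0 for all x) and symmetric (⟨Tx, y⟩ = ⟨Ty, x⟩ for all x, y), and let M be a closed subspace of X on which T is bounded below, i.e., there is c > 0 with ‖Tx‖ ≥ c‖x‖ for all x ∈ M. Then ⟨Tx, x⟩ ≥ (c²/‖T‖) ‖x‖² for all x ∈ M. -/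
/-! Cauchy–Schwarz for the positive symmetric form `(x, y) ↦ T x y` gives
`(T x y)² ≤ T x x · T y y ≤ T x x · ‖T‖ ‖y‖²`, hence `‖T x‖² ≤ ‖T‖ · T x x`; on `M` the left side
is at least `c² ‖x‖²`. -/

open NormedSpace

namespace ContinuousLinearMap

variable {E : Type*} [SeminormedAddCommGroup E] [NormedSpace ℝ E] (T : E →L[ℝ] StrongDual ℝ E)

theorem apply_self_le_opNorm_mul_sq (y : E) : T y y ≤ ‖T‖ * ‖y‖ ^ 2 :=
  calc T y y ≤ ‖T y y‖ := le_abs_self _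
    _ ≤ ‖T‖ * ‖y‖ * ‖y‖ := T.le_opNorm₂ y y
    _ = ‖T‖ * ‖y‖ ^ 2 := by ring

theorem norm_apply_sq_le_opNorm_mul_apply_self (hpos : ∀ x, 0 ≤ T x x)
    (hsymm : ∀ x y, T x y = T y x) (x : E) :
    ‖T x‖ ^ 2 ≤ ‖T‖ * T x x := by
  have hbound : ‖T x‖ ≤ √(‖T‖ * T x x) := by
    refine opNorm_le_bound _ (Real.sqrt_nonneg _) fun y ↦ ?_
    have hsq : T x y ^ 2 ≤ ‖T‖ * T x x * ‖y‖ ^ 2 :=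
      calc T x y ^ 2 ≤ T x x * T y y :=
            T.toBilinForm.apply_sq_le_of_symm hpos ⟨fun x y ↦ hsymm x y⟩ x y
        _ ≤ T x x * (‖T‖ * ‖y‖ ^ 2) :=
            mul_le_mul_of_nonneg_left (T.apply_self_le_opNorm_mul_sq y) (hpos x)
        _ = ‖T‖ * T x x * ‖y‖ ^ 2 := by ring
    simpa only [Real.norm_eq_abs, Real.sqrt_mul' _ (sq_nonneg ‖y‖),
      Real.sqrt_sq (norm_nonneg y)] using Real.abs_le_sqrt hsq
  exact (Real.le_sqrt (norm_nonneg _) (mul_nonneg (norm_nonneg T) (hpos x))).mp hbound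

end ContinuousLinearMap

theorem stmt_10_general (X : Type*) [NormedAddCommGroup X] [NormedSpace ℝ X]
    (T : X →L[ℝ] StrongDual ℝ X)
    (hpos : ∀ x : X, 0 ≤ T x x)
    (hsymm : ∀ x y : X, T x y = T y x)
    (M : Submodule ℝ X)
    (c : ℝ) (hc : 0 < c)
    (hbelow : ∀ x ∈ M, c * ‖x‖ ≤ ‖T x‖) :
    ∀ x ∈ M, c ^ 2 / ‖T‖ * ‖x‖ ^ 2 ≤ T x x := by
  intro x hx
  have hlower : c ^ 2 * ‖x‖ ^ 2 ≤ ‖T x‖ ^ 2 := by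
    rw [← mul_pow]
    exact pow_le_pow_left₀ (by positivity) (hbelow x hx) 2
  rw [div_mul_eq_mul_div]
  -- `div_le_of_le_mul₀` also covers `‖T‖ = 0`, where the left side is `0` since `a / 0 = 0`.
  refine div_le_of_le_mul₀ (norm_nonneg T) (hpos x) ?_
  calc c ^ 2 * ‖x‖ ^ 2 ≤ ‖T x‖ ^ 2 := hlower
    _ ≤ ‖T‖ * T x x := T.norm_apply_sq_le_opNorm_mul_apply_self hpos hsymm x
    _ = T x x * ‖T‖ := mul_comm _ _

theorem stmt_10 (X : Type*) [NormedAddCommGroup X] [NormedSpace ℝ X] [CompleteSpace X]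
    (T : X →L[ℝ] StrongDual ℝ X)
    (hns : ‖T‖ ≠ 0)
    (hpos : ∀ x : X, 0 ≤ T x x)
    (hsymm : ∀ x y : X, T x y = T y x)
    (M : Submodule ℝ X) (hMcl : IsClosed (M : Set X))
    (c : ℝ) (hc : 0 < c)
    (hbelow : ∀ x ∈ M, c * ‖x‖ ≤ ‖T x‖) :
    ∀ x ∈ M, c ^ 2 / ‖T‖ * ‖x‖ ^ 2 ≤ T x x :=
  stmt_10_general X T hpos hsymm M c hc hbelow
end

section
/- Let X be a real Banach space and B : X × X → ℝ a symmetric, positive definite bilinear form (an inner product on X) such that B(x, x) ≤ c²‖x‖² for all x ∈ X and some constant c > 0. Let M be a closed subspace of X on which the induced norm is equivalent to the original norm, i.e., there is k > 0 with B(x, x) ≥ k‖x‖² for all x ∈ M. Then M is complemented in X: there exists a closed subspace N of X with X = M ⊕ N (equivalently, there is a bounded linear projection of X onto M). -/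
/-!
Equip `X` with the inner product `B`. The bound `B x x ≤ c² ‖x‖²` makes the identity
`X → (X, B)` continuous, and the lower bound on `M` makes it bounded below there, so `M` is
complete for `B` as well. Hence the `B`-orthogonal projection onto `M` exists, and read back in
the original norm it is a continuous projection of `X` onto `M`.
-/

theorem Submodule.ClosedComplemented.of_norm_le_mul_norm_map {𝕜 X E : Type*} [RCLike 𝕜]
    [NormedAddCommGroup X] [NormedSpace 𝕜 X] [NormedAddCommGroup E] [InnerProductSpace 𝕜 E]
    (J : X →L[𝕜] E) (M : Submodule 𝕜 X) [CompleteSpace M] (C : ℝ)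
    (hJ : ∀ m ∈ M, ‖m‖ ≤ C * ‖J m‖) : M.ClosedComplemented := by
  set L := J ∘L M.subtypeL
  have hL : AntilipschitzWith C.toNNReal L := L.antilipschitz_of_bound fun m =>
    (hJ m m.2).trans (mul_le_mul_of_nonneg_right (Real.le_coe_toNNReal C) (norm_nonneg _))
  have : CompleteSpace L.range := IsComplete.completeSpace_coe (s := (L.range : Set E)) <| by
    rw [LinearMap.coe_range]
    exact hL.isComplete_range L.uniformContinuous
  set e₀ := LinearEquiv.ofInjective L.toLinearMap hL.injective
  have he₀ : ∀ y, J (e₀.symm y) = y := fun y => congrArg Subtype.val (e₀.apply_symm_apply y)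
  let e : M ≃L[𝕜] L.range := e₀.toContinuousLinearEquivOfBounds ‖L‖ C
    (fun m => L.le_opNorm m) fun y => by
      simpa only [he₀, Submodule.coe_norm] using hJ _ (e₀.symm y).2
  refine ⟨e.symm ∘L L.range.orthogonalProjectionOnto ∘L J, fun m => ?_⟩
  change e.symm (L.range.orthogonalProjectionOnto (e m)) = m
  rw [L.range.orthogonalProjectionOnto_mem_subspace_eq_self, e.symm_apply_apply]

/-- A copy of `X` that can carry an inner product without clashing with the norm of `X`. -/
def WithInner (X : Type*) : Type _ := X

namespace WithInner

variable {X : Type*} [AddCommGroup X] [Module ℝ X]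

instance : AddCommGroup (WithInner X) := ‹AddCommGroup X›

instance : Module ℝ (WithInner X) := ‹Module ℝ X›

def equiv : X ≃ₗ[ℝ] WithInner X := LinearEquiv.refl ℝ X

abbrev innerCore (B : X →ₗ[ℝ] X →ₗ[ℝ] ℝ) (hsymm : ∀ x y : X, B x y = B y x)
    (hposdef : ∀ x : X, x ≠ 0 → 0 < B x x) : InnerProductSpace.Core ℝ (WithInner X) where
  inner u v := B (equiv.symm u) (equiv.symm v)
  conj_inner_symm u v := hsymm _ _
  re_inner_nonneg u := by
    by_cases hu : equiv.symm u = 0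
    · simp [hu]
    · exact (hposdef _ hu).le
  add_left u v w := by simp
  smul_left u v r := by simp
  definite u h := by
    by_contra hu
    exact (hposdef (equiv.symm u) (by simpa using hu)).ne' h

end WithInner

theorem stmt_11_general (X : Type*) [NormedAddCommGroup X] [NormedSpace ℝ X] [CompleteSpace X]
    (B : X →ₗ[ℝ] X →ₗ[ℝ] ℝ)
    (hsymm : ∀ x y : X, B x y = B y x)
    (hposdef : ∀ x : X, x ≠ 0 → 0 < B x x)
    (c : ℝ)
    (hcont : ∀ x : X, B x x ≤ c ^ 2 * ‖x‖ ^ 2)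
    (M : Submodule ℝ X) (hMcl : IsClosed (M : Set X))
    (k : ℝ) (hk : 0 < k)
    (hequiv : ∀ x ∈ M, k * ‖x‖ ^ 2 ≤ B x x) :
    M.ClosedComplemented := by
  have : CompleteSpace M := hMcl.completeSpace_coe
  let core := WithInner.innerCore B hsymm hposdef
  let : NormedAddCommGroup (WithInner X) := core.toNormedAddCommGroup
  let : InnerProductSpace ℝ (WithInner X) := .ofCore core.toCore
  have norm_sq : ∀ x : X, ‖WithInner.equiv x‖ ^ 2 = B x x := fun x =>
    (real_inner_self_eq_norm_sq _).symm
  let J : X →L[ℝ] WithInner X :=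
    (WithInner.equiv (X := X)).toLinearMap.mkContinuous |c| fun x => by
      rw [← pow_le_pow_iff_left₀ (norm_nonneg _) (by positivity) two_ne_zero, mul_pow, sq_abs]
      exact (norm_sq x).trans_le (hcont x)
  refine Submodule.ClosedComplemented.of_norm_le_mul_norm_map J M (√k)⁻¹ fun m hm => ?_
  rw [inv_mul_eq_div, le_div_iff₀' (by positivity),
    ← pow_le_pow_iff_left₀ (by positivity) (norm_nonneg _) two_ne_zero, mul_pow,
    Real.sq_sqrt hk.le]
  exact (hequiv m hm).trans_eq (norm_sq m).symm

theorem stmt_11 (X : Type*) [NormedAddCommGroup X] [NormedSpace ℝ X] [CompleteSpace X]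
    (B : X →ₗ[ℝ] X →ₗ[ℝ] ℝ)
    (hsymm : ∀ x y : X, B x y = B y x)
    (hposdef : ∀ x : X, x ≠ 0 → 0 < B x x)
    (c : ℝ) (hc : 0 < c)
    (hcont : ∀ x : X, B x x ≤ c ^ 2 * ‖x‖ ^ 2)
    (M : Submodule ℝ X) (hMcl : IsClosed (M : Set X))
    (k : ℝ) (hk : 0 < k)
    (hequiv : ∀ x ∈ M, k * ‖x‖ ^ 2 ≤ B x x) :
    M.ClosedComplemented :=
  stmt_11_general X B hsymm hposdef c hcont M hMcl k hk hequiv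
end

section
/- Let X be a real Banach space and T : X → X* a linear operator which is injective, positive (⟨Tx, x⟩ ≥ 0 for all x), symmetric (⟨Tx, y⟩ = ⟨Ty, x⟩ for all x, y), and not strictly singular, i.e., there exist an infinite-dimensional closed subspace M of X and a constant c > 0 such that ‖Tx‖ ≥ c‖x‖ for all x ∈ M. Then either X is isomorphic to a Hilbert space, or X contains a nontrivially complemented subspace which is isomorphic to a Hilbert space, i.e., there exists an infinite-dimensional proper closed subspace W of X which is complemented in X and is, with the norm induced from X, isomorphic to a Hilbert space. -/
open NormedSpace

/-- A real Hilbert space together with a continuous linear equivalence from `X` onto it: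
witnesses that `X` is isomorphic to a Hilbert space. -/
structure HilbertIso (X : Type*) [NormedAddCommGroup X] [NormedSpace ℝ X] where
  carrier : Type
  [grp : NormedAddCommGroup carrier]
  [ips : InnerProductSpace ℝ carrier]
  [cpl : CompleteSpace carrier]
  equiv : X ≃L[ℝ] carrier

/-!
By the closed graph theorem a symmetric `T : X → X*` is bounded, and Cauchy–Schwarz for the
positive form `⟨T·, ·⟩` gives `‖T x‖² ≤ ‖T‖ ⟨T x, x⟩`. Hence on `M`, where `T` is bounded below,
`⟨T·, ·⟩` is an inner product whose norm is equivalent to the norm of `X`. Take a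
`⟨T·, ·⟩`-orthonormal sequence `v₀, v₁, …` in `M` and let `W` be the closed span of `v₁, v₂, …`.
Then `W` is isomorphic to `ℓ²(ℕ)`, it misses `v₀`, and it is complemented by the
`⟨T·, ·⟩`-orthogonal projection, which sends `x` to the Riesz representative of `⟨T x, ·⟩|_W`.
So the second alternative always holds, witnessed by `ℓ²(ℕ)`, which (unlike `M` itself) lives in
`Type` as `HilbertIso` requires.
-/

noncomputable section

open Filter Topology Submodule Set

theorem LinearMap.continuous_of_apply_symm {X : Type*} [NormedAddCommGroup X] [NormedSpace ℝ X]
    [CompleteSpace X] (T : X →ₗ[ℝ] StrongDual ℝ X) (hsymm : ∀ x y, T x y = T y x) :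
    Continuous T := by
  refine T.continuous_of_seq_closed_graph fun u x f hu hTu => ?_
  ext y
  refine tendsto_nhds_unique (f := fun n => T (u n) y)
    ((ContinuousLinearMap.apply ℝ ℝ y).continuous.tendsto f |>.comp hTu) ?_
  have : Tendsto (fun n => T y (u n)) atTop (𝓝 (T y x)) := (T y).continuous.tendsto x |>.comp hu
  simpa only [hsymm y] using this

namespace ContinuousLinearMap

variable {E : Type*} [NormedAddCommGroup E] [NormedSpace ℝ E] (B : E →L[ℝ] E →L[ℝ] ℝ)

abbrev preInnerProductCore (hpos : ∀ x, 0 ≤ B x x) (hsymm : ∀ x y, B x y = B y x) :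
    PreInnerProductSpace.Core ℝ E where
  inner x y := B x y
  conj_inner_symm x y := hsymm y x
  re_inner_nonneg := hpos
  add_left x y z := by simp only [map_add, add_apply]
  smul_left x y r := by simp only [map_smul, smul_apply, smul_eq_mul, conj_trivial]

theorem apply_mul_apply_le (hpos : ∀ x, 0 ≤ B x x) (hsymm : ∀ x y, B x y = B y x) (x y : E) :
    B x y * B x y ≤ B x x * B y y := by
  have := @InnerProductSpace.Core.inner_mul_inner_self_le ℝ E _ _ _
    (B.preInnerProductCore hpos hsymm) x y
  change ‖B x y‖ * ‖B y x‖ ≤ B x x * B y y at this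
  rw [hsymm y x, ← norm_mul, Real.norm_eq_abs] at this
  exact (le_abs_self _).trans this

theorem norm_apply_mul_self_le (hpos : ∀ x, 0 ≤ B x x) (hsymm : ∀ x y, B x y = B y x) (x : E) :
    ‖B x‖ * ‖B x‖ ≤ ‖B‖ * B x x := by
  have hBx : 0 ≤ ‖B‖ * B x x := mul_nonneg (norm_nonneg B) (hpos x)
  have hbound (y : E) : ‖B x y‖ ≤ √(‖B‖ * B x x) * ‖y‖ := by
    rw [← Real.sqrt_mul_self (norm_nonneg y), ← Real.sqrt_mul hBx,
      ← Real.sqrt_mul_self (norm_nonneg (B x y))]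
    apply Real.sqrt_le_sqrt
    calc ‖B x y‖ * ‖B x y‖ = B x y * B x y := by rw [Real.norm_eq_abs, abs_mul_abs_self]
      _ ≤ B x x * B y y := B.apply_mul_apply_le hpos hsymm x y
      _ ≤ B x x * (‖B‖ * ‖y‖ * ‖y‖) :=
        mul_le_mul_of_nonneg_left ((le_abs_self _).trans (B.le_opNorm₂ y y)) (hpos x)
      _ = ‖B‖ * B x x * (‖y‖ * ‖y‖) := by ring
  calc ‖B x‖ * ‖B x‖ ≤ √(‖B‖ * B x x) * √(‖B‖ * B x x) :=
        mul_self_le_mul_self (norm_nonneg _) ((B x).opNorm_le_bound (Real.sqrt_nonneg _) hbound)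
    _ = ‖B‖ * B x x := Real.mul_self_sqrt hBx

theorem exists_pos_mul_le_apply_self (hpos : ∀ x, 0 ≤ B x x) (hsymm : ∀ x y, B x y = B y x)
    {s : Set E} {c : ℝ} (hc : 0 < c) (hs : ∀ x ∈ s, c * ‖x‖ ≤ ‖B x‖) :
    ∃ k, 0 < k ∧ ∀ x ∈ s, k * ‖x‖ * ‖x‖ ≤ B x x := by
  refine ⟨c * c / (‖B‖ + 1), by positivity, fun x hx => ?_⟩
  have hlow : c * ‖x‖ * (c * ‖x‖) ≤ ‖B x‖ * ‖B x‖ := mul_self_le_mul_self (by positivity) (hs x hx)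
  have hup := B.norm_apply_mul_self_le hpos hsymm x
  rw [div_mul_eq_mul_div, div_mul_eq_mul_div, div_le_iff₀ (by positivity)]
  nlinarith [hpos x, norm_nonneg B]

end ContinuousLinearMap

structure CoerciveSymmForm (E : Type*) [NormedAddCommGroup E] [NormedSpace ℝ E] where
  toCLM : E →L[ℝ] E →L[ℝ] ℝ
  symm : ∀ x y, toCLM x y = toCLM y x
  isCoercive : IsCoercive toCLM

namespace CoerciveSymmForm

variable {E : Type*} [NormedAddCommGroup E] [NormedSpace ℝ E] (B : CoerciveSymmForm E)

instance : CoeFun (CoerciveSymmForm E) (fun _ => E → E →L[ℝ] ℝ) := ⟨fun B => B.toCLM⟩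

theorem apply_self_nonneg (x : E) : 0 ≤ B x x := by
  obtain ⟨C, hC, hB⟩ := B.isCoercive
  exact (mul_nonneg (mul_nonneg hC.le (norm_nonneg x)) (norm_nonneg x)).trans (hB x)

theorem eq_zero_of_apply_self_eq_zero {x : E} (hx : B x x = 0) : x = 0 := by
  obtain ⟨C, hC, hB⟩ := B.isCoercive
  have : C * ‖x‖ * ‖x‖ ≤ 0 := (hB x).trans_eq hx
  have : ‖x‖ * ‖x‖ ≤ 0 := by nlinarith
  exact norm_eq_zero.1 (mul_self_eq_zero.1 (le_antisymm this (mul_self_nonneg _)))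

def Space (_B : CoerciveSymmForm E) : Type _ := E

instance : AddCommGroup B.Space := inferInstanceAs (AddCommGroup E)
instance : Module ℝ B.Space := inferInstanceAs (Module ℝ E)

abbrev innerProductCore : InnerProductSpace.Core ℝ B.Space where
  __ := B.toCLM.preInnerProductCore B.apply_self_nonneg B.symm
  definite _ := B.eq_zero_of_apply_self_eq_zero

instance : NormedAddCommGroup B.Space := B.innerProductCore.toNormedAddCommGroup

instance : InnerProductSpace ℝ B.Space := InnerProductSpace.ofCore B.innerProductCore.toCore

theorem norm_mul_self_eq (x : B.Space) : ‖x‖ * ‖x‖ = B x x :=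
  (real_inner_self_eq_norm_mul_norm x).symm

def toSpaceₗ : E ≃ₗ[ℝ] B.Space := LinearEquiv.refl ℝ E

def toSpace : E ≃L[ℝ] B.Space where
  toLinearEquiv := B.toSpaceₗ
  continuous_toFun := AddMonoidHomClass.continuous_of_bound B.toSpaceₗ √‖B.toCLM‖ fun x => by
    rw [mul_self_le_mul_self_iff (norm_nonneg _) (by positivity), norm_mul_self_eq]
    calc B x x ≤ ‖B.toCLM‖ * ‖x‖ * ‖x‖ := (le_abs_self _).trans (B.toCLM.le_opNorm₂ x x)
      _ = _ := by rw [mul_mul_mul_comm, Real.mul_self_sqrt (norm_nonneg B.toCLM), mul_assoc]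
  continuous_invFun := by
    obtain ⟨C, hC, hB⟩ := B.isCoercive
    refine AddMonoidHomClass.continuous_of_bound B.toSpaceₗ.symm (√C)⁻¹ fun x => ?_
    rw [mul_self_le_mul_self_iff (norm_nonneg _) (by positivity), mul_mul_mul_comm,
      norm_mul_self_eq, ← mul_inv, Real.mul_self_sqrt hC.le, le_inv_mul_iff₀ hC, ← mul_assoc]
    exact hB _

instance [CompleteSpace E] : CompleteSpace B.Space :=
  (completeSpace_congr (e := B.toSpace.toEquiv) B.toSpace.isUniformEmbedding).1 ‹_›

theorem not_finiteDimensional {u : ℕ → E} (hu : Orthonormal ℝ (B.toSpace ∘ u)) :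
    ¬ FiniteDimensional ℝ E := fun _ =>
  have := hu.linearIndependent.of_comp.finite_of_isNoetherian
  not_finite ℕ

theorem nonempty_hilbertIso [CompleteSpace E] {u : ℕ → E} (hu : Orthonormal ℝ (B.toSpace ∘ u))
    (hdense : Dense (span ℝ (range u) : Set E)) : Nonempty (HilbertIso E) := by
  have hspan : Dense (span ℝ (range (B.toSpace ∘ u)) : Set B.Space) := by
    refine (B.toSpace.surjective.denseRange.dense_image B.toSpace.continuous hdense).mono ?_
    rw [range_comp]
    exact image_span_subset_span (B.toSpace : E →ₗ[ℝ] B.Space) _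
  let b : HilbertBasis ℕ ℝ B.Space :=
    HilbertBasis.mk hu (dense_iff_topologicalClosure_eq_top.1 hspan).ge
  exact ⟨⟨lp (fun _ : ℕ => ℝ) 2, B.toSpace.trans b.repr.toContinuousLinearEquiv⟩⟩

variable {X : Type*} [NormedAddCommGroup X] [NormedSpace ℝ X]

def restrict (T : X →L[ℝ] StrongDual ℝ X) (hsymm : ∀ x y, T x y = T y x) (W : Submodule ℝ X)
    {k : ℝ} (hk : 0 < k) (hW : ∀ x ∈ W, k * ‖x‖ * ‖x‖ ≤ T x x) : CoerciveSymmForm W where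
  toCLM := T.bilinearComp W.subtypeL W.subtypeL
  symm x y := hsymm x y
  isCoercive := ⟨k, hk, fun x => hW x x.2⟩

theorem closedComplemented {W : Submodule ℝ X} [CompleteSpace W] (T : X →L[ℝ] StrongDual ℝ X)
    (B : CoerciveSymmForm W) (hB : ∀ x y : W, B x y = T x y) : W.ClosedComplemented := by
  let restrict : StrongDual ℝ X →L[ℝ] StrongDual ℝ B.Space :=
    (ContinuousLinearMap.compL ℝ B.Space X ℝ).flip
      (W.subtypeL ∘L (B.toSpace.symm : B.Space →L[ℝ] W))
  let riesz : StrongDual ℝ B.Space →L[ℝ] B.Space :=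
    (InnerProductSpace.toDual ℝ B.Space).symm.toContinuousLinearEquiv.toContinuousLinearMap
  refine ⟨(B.toSpace.symm : B.Space →L[ℝ] W) ∘L riesz ∘L restrict ∘L T, fun w => ?_⟩
  have : restrict (T w) = InnerProductSpace.toDual ℝ B.Space (B.toSpace w) := by
    ext v
    exact (hB w (B.toSpace.symm v)).symm
  change B.toSpace.symm ((InnerProductSpace.toDual ℝ B.Space).symm (restrict (T w))) = w
  rw [this, LinearIsometryEquiv.symm_apply_apply, ContinuousLinearEquiv.symm_apply_apply]

end CoerciveSymmForm

theorem exists_orthonormal_nat_of_not_finiteDimensional {H : Type*} [NormedAddCommGroup H]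
    [InnerProductSpace ℝ H] (hH : ¬ FiniteDimensional ℝ H) : ∃ v : ℕ → H, Orthonormal ℝ v := by
  let b := Module.Basis.ofVectorSpace ℝ H
  have : Infinite (Module.Basis.ofVectorSpaceIndex ℝ H) :=
    not_finite_iff_infinite.1 fun _ => hH (Module.Finite.of_basis b)
  have hli : LinearIndependent ℝ (b ∘ Infinite.natEmbedding _) :=
    b.linearIndependent.comp _ (Infinite.natEmbedding _).injective
  exact ⟨_, InnerProductSpace.gramSchmidtNormed_orthonormal hli⟩

namespace Submodule

variable {X : Type*} [NormedAddCommGroup X] [NormedSpace ℝ X]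

theorem topologicalClosure_span_le_ker (f : StrongDual ℝ X) {s : Set X}
    (hs : ∀ x ∈ s, f x = 0) : (span ℝ s).topologicalClosure ≤ LinearMap.ker (f : X →ₗ[ℝ] ℝ) :=
  topologicalClosure_minimal _ (span_le.2 hs) f.isClosed_ker

theorem dense_span_range_topologicalClosure (u : ℕ → X) :
    Dense (span ℝ (range fun n => (⟨u n, le_topologicalClosure _ (subset_span (mem_range_self n))⟩ :
      (span ℝ (range u)).topologicalClosure)) : Set (span ℝ (range u)).topologicalClosure) := by
  rw [Subtype.dense_iff, ← coe_subtype, ← map_coe, map_span, ← range_comp]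
  exact (topologicalClosure_coe _).subset

end Submodule

end

theorem stmt_12_general (X : Type*) [NormedAddCommGroup X] [NormedSpace ℝ X] [CompleteSpace X]
    (T : X →ₗ[ℝ] StrongDual ℝ X)
    (hpos : ∀ x : X, 0 ≤ T x x)
    (hsymm : ∀ x y : X, T x y = T y x)
    (hnss : ∃ (M : Submodule ℝ X) (c : ℝ), IsClosed (M : Set X) ∧
      ¬ FiniteDimensional ℝ M ∧ 0 < c ∧ ∀ x ∈ M, c * ‖x‖ ≤ ‖T x‖) :
    Nonempty (HilbertIso X) ∨
      ∃ W : Submodule ℝ X, IsClosed (W : Set X) ∧ ¬ FiniteDimensional ℝ W ∧ W ≠ ⊤ ∧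
        W.ClosedComplemented ∧ Nonempty (HilbertIso W) := by
  obtain ⟨M, c, hMc, hMinf, hc, hM⟩ := hnss
  let Tc : X →L[ℝ] StrongDual ℝ X := ⟨T, T.continuous_of_apply_symm hsymm⟩
  obtain ⟨k, hk, hMk⟩ := Tc.exists_pos_mul_le_apply_self hpos hsymm hc hM
  have := hMc.completeSpace_coe
  let BM := CoerciveSymmForm.restrict Tc hsymm M hk hMk
  obtain ⟨v, hv⟩ := exists_orthonormal_nat_of_not_finiteDimensional (H := BM.Space)
    fun _ => hMinf BM.toSpace.symm.toLinearEquiv.finiteDimensional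
  have hTv : ∀ i j, T (BM.toSpace.symm (v i)) (BM.toSpace.symm (v j)) = if i = j then 1 else 0 :=
    orthonormal_iff_ite.1 hv
  let u : ℕ → X := fun n => BM.toSpace.symm (v (n + 1))
  let W := (Submodule.span ℝ (Set.range u)).topologicalClosure
  have hWM : W ≤ M := Submodule.topologicalClosure_minimal _
    (Submodule.span_le.2 (Set.range_subset_iff.2 fun n => (BM.toSpace.symm (v (n + 1))).2)) hMc
  have := (Submodule.span ℝ (Set.range u)).isClosed_topologicalClosure.completeSpace_coe
  let BW := CoerciveSymmForm.restrict Tc hsymm W hk fun x hx => hMk x (hWM hx)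
  have hu : Orthonormal ℝ (BW.toSpace ∘ fun n => (⟨u n, Submodule.le_topologicalClosure _
      (Submodule.subset_span (Set.mem_range_self n))⟩ : W)) :=
    orthonormal_iff_ite.2 fun i j => (hTv _ _).trans (by simp)
  have hv₀ : ((BM.toSpace.symm (v 0) : M) : X) ∉ W := fun hmem => by
    have := Submodule.topologicalClosure_span_le_ker (T (BM.toSpace.symm (v 0))) ?_ hmem
    · simp [hTv] at this
    · exact Set.forall_mem_range.2 fun n => (hTv 0 (n + 1)).trans (if_neg n.succ_ne_zero.symm)
  exact .inr ⟨W, (Submodule.span ℝ (Set.range u)).isClosed_topologicalClosure,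
    BW.not_finiteDimensional hu, fun h => hv₀ (h ▸ Submodule.mem_top),
    BW.closedComplemented Tc fun _ _ => rfl,
    BW.nonempty_hilbertIso hu (Submodule.dense_span_range_topologicalClosure u)⟩

theorem stmt_12 (X : Type*) [NormedAddCommGroup X] [NormedSpace ℝ X] [CompleteSpace X]
    (T : X →ₗ[ℝ] StrongDual ℝ X)
    (hinj : Function.Injective T)
    (hpos : ∀ x : X, 0 ≤ T x x)
    (hsymm : ∀ x y : X, T x y = T y x)
    (hnss : ∃ (M : Submodule ℝ X) (c : ℝ), IsClosed (M : Set X) ∧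
      ¬ FiniteDimensional ℝ M ∧ 0 < c ∧ ∀ x ∈ M, c * ‖x‖ ≤ ‖T x‖) :
    Nonempty (HilbertIso X) ∨
      ∃ W : Submodule ℝ X, IsClosed (W : Set X) ∧ ¬ FiniteDimensional ℝ W ∧ W ≠ ⊤ ∧
        W.ClosedComplemented ∧ Nonempty (HilbertIso W) :=
  stmt_12_general X T hpos hsymm hnss
end

section
/- Let X be a real Banach space and S : X → X a bounded linear operator. Then the following are equivalent: (a) for every x ∈ X there exists x* ∈ X* such that ‖x*‖² = ‖x‖² = ⟨x*, x⟩ and ⟨x*, Sx⟩ ≥ 0; (b) ‖x + λSx‖ ≥ ‖x‖ for all x ∈ X and all λ > 0. -/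
/-!
(a) ⇒ (b): if `f` norms `x`, then `‖x‖² = f x ≤ f (x + λ S x) ≤ ‖x‖ ‖x + λ S x‖`.

(b) ⇒ (a): (b) says that the segment `[x, x + S x]` misses the open ball of radius `‖x‖`. A
functional separating the two attains its norm at `x`, is nonnegative at `S x`, and after
rescaling is the required `x*`.
-/

open Metric

section

variable {X : Type*} [NormedAddCommGroup X] [NormedSpace ℝ X]

theorem StrongDual.norm_mul_le_of_forall_mem_ball_lt (f : StrongDual ℝ X) {r u : ℝ} (hr : 0 < r)
    (h : ∀ a ∈ ball (0 : X) r, f a < u) : ‖f‖ * r ≤ u := by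
  by_contra! hlt
  obtain ⟨a, ha, hfa⟩ := f.exists_lt_apply_of_lt_opNorm ((div_lt_iff₀ hr).2 hlt)
  have hmem : ∀ b : X, ‖b‖ < 1 → r • b ∈ ball (0 : X) r := fun b hb => by
    rw [mem_ball_zero_iff, norm_smul, Real.norm_of_nonneg hr.le]
    exact mul_lt_of_lt_one_right hr hb
  have hpos := h _ (hmem a ha)
  have hneg := h _ (hmem (-a) (by rwa [norm_neg]))
  rw [map_smul, smul_eq_mul] at hpos
  rw [map_smul, map_neg, smul_eq_mul] at hneg
  rw [Real.norm_eq_abs, lt_abs, div_lt_iff₀ hr, div_lt_iff₀ hr] at hfa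
  rcases hfa with hfa | hfa <;> linarith

theorem norm_le_norm_add_smul_of_dual {x y : X} (f : StrongDual ℝ X) (hf : ‖f‖ = ‖x‖)
    (hfx : f x = ‖x‖ ^ 2) (hfy : 0 ≤ f y) {l : ℝ} (hl : 0 ≤ l) : ‖x‖ ≤ ‖x + l • y‖ := by
  rcases (norm_nonneg x).eq_or_lt with hx | hx
  · rw [← hx]; exact norm_nonneg _
  refine le_of_mul_le_mul_left ?_ hx
  calc ‖x‖ * ‖x‖ = f x := by rw [hfx, sq]
    _ ≤ f (x + l • y) := by simpa using mul_nonneg hl hfy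
    _ ≤ ‖f‖ * ‖x + l • y‖ := (le_abs_self _).trans (f.le_opNorm _)
    _ = ‖x‖ * ‖x + l • y‖ := by rw [hf]

theorem exists_dual_of_forall_norm_le_norm_add_smul {x y : X}
    (h : ∀ l : ℝ, 0 < l → ‖x‖ ≤ ‖x + l • y‖) :
    ∃ f : StrongDual ℝ X, ‖f‖ = ‖x‖ ∧ f x = ‖x‖ ^ 2 ∧ 0 ≤ f y := by
  rcases eq_or_ne x 0 with rfl | hx
  · exact ⟨0, by simp⟩
  have hx : 0 < ‖x‖ := norm_pos_iff.2 hx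
  have hdisj : Disjoint (ball (0 : X) ‖x‖) (segment ℝ x (x + y)) := by
    rw [Set.disjoint_right, segment_eq_image']
    rintro _ ⟨l, hl, rfl⟩
    rw [mem_ball_zero_iff, not_lt, add_sub_cancel_left]
    rcases hl.1.eq_or_lt with rfl | hl
    · simp
    · exact h l hl
  obtain ⟨g, u, hball, hseg⟩ :=
    geometric_hahn_banach_open (convex_ball 0 _) isOpen_ball (convex_segment _ _) hdisj
  have hgu : ‖g‖ * ‖x‖ ≤ u := g.norm_mul_le_of_forall_mem_ball_lt hx hball
  have hux : u ≤ g x := hseg x (left_mem_segment ℝ _ _)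
  have hgx : g x = ‖g‖ * ‖x‖ :=
    le_antisymm ((le_abs_self _).trans (g.le_opNorm x)) (hgu.trans hux)
  have hgy : 0 ≤ g y := by
    have := hseg (x + y) (right_mem_segment ℝ _ _)
    rw [map_add] at this
    linarith
  have hg : 0 < ‖g‖ := by
    have := hball 0 (mem_ball_self hx)
    rw [map_zero] at this
    nlinarith
  refine ⟨(‖x‖ / ‖g‖) • g, ?_, ?_, ?_⟩
  · rw [norm_smul, Real.norm_of_nonneg (by positivity), div_mul_cancel₀ _ hg.ne']
  · rw [smul_apply, hgx, smul_eq_mul]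
    field_simp
  · exact mul_nonneg (by positivity) hgy
end

theorem stmt_13_general (X : Type*) [NormedAddCommGroup X] [NormedSpace ℝ X]
    (S : X →L[ℝ] X) :
    (∀ x : X, ∃ f : StrongDual ℝ X, ‖f‖ ^ 2 = ‖x‖ ^ 2 ∧ f x = ‖x‖ ^ 2 ∧ 0 ≤ f (S x)) ↔
    (∀ x : X, ∀ l : ℝ, 0 < l → ‖x‖ ≤ ‖x + l • S x‖) := by
  refine ⟨fun h x l hl => ?_, fun h x => ?_⟩
  · obtain ⟨f, hf, hfx, hfS⟩ := h x
    rw [pow_left_inj₀ (norm_nonneg _) (norm_nonneg _) two_ne_zero] at hf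
    exact norm_le_norm_add_smul_of_dual f hf hfx hfS hl.le
  · obtain ⟨f, hf, hfx, hfS⟩ := exists_dual_of_forall_norm_le_norm_add_smul (h x)
    exact ⟨f, by rw [hf], hfx, hfS⟩

theorem stmt_13 (X : Type*) [NormedAddCommGroup X] [NormedSpace ℝ X] [CompleteSpace X]
    (S : X →L[ℝ] X) :
    (∀ x : X, ∃ f : StrongDual ℝ X, ‖f‖ ^ 2 = ‖x‖ ^ 2 ∧ f x = ‖x‖ ^ 2 ∧ 0 ≤ f (S x)) ↔
    (∀ x : X, ∀ l : ℝ, 0 < l → ‖x‖ ≤ ‖x + l • S x‖) :=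
  stmt_13_general X S
end
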